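/- Let Φ be a 3-CNF formula with clauses C_1,…,C_n and variables A_1,…,A_m, and let P^Φ be the associated disjunctive program. If E is an elementary set for P^Φ containing both c_0 and c_{n+1}, then E contains c_j for every 1 ≤ j ≤ n. -/

import Mathlib

structure Rule (α : Type) where
  B : Finset α
  F : Finset α
  H : Finset α

variable {α : Type}

/-- Z is outbound in Y for program P. -/
def Outbound [DecidableEq α] (P : Set (Rule α)) (Y Z : Finset α) : Prop :=
  ∃ r ∈ P, (r.H ∩ Z).Nonempty ∧ (r.B ∩ (Y \ Z)).Nonempty ∧
    r.B ∩ Z = ∅ ∧ r.H ∩ (Y \ Z) = ∅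

/-- Y is an elementary set for P. -/
def Elementary [DecidableEq α] (P : Set (Rule α)) (Y : Finset α) : Prop :=
  Y.Nonempty ∧ ∀ Z : Finset α, Z ⊂ Y → Z.Nonempty → Outbound P Y Z

/-- X is a disjunctive set for P. -/
def DisjSet [DecidableEq α] (P : Set (Rule α)) (X : Finset α) : Prop :=
  ∃ r ∈ P, 1 < (r.H ∩ X).card

/-- The projection P_X of P on a set X of atoms. -/
def proj [DecidableEq α] (P : Set (Rule α)) (X : Finset α) : Set (Rule α) :=
  {r' | ∃ r ∈ P, (r.B ∩ X).Nonempty ∧ (r.H ∩ X).Nonempty ∧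
        r' = ⟨r.B ∩ X, ∅, r.H ∩ X⟩}

/-- P is head-elementary-set-free. -/
def HEF [DecidableEq α] (P : Set (Rule α)) : Prop :=
  ∀ r ∈ P, ∀ E : Finset α, Elementary P E → (E ∩ r.H).card ≤ 1

/-- Atoms of the program `P^Φ`. -/
inductive Atom : Type
  | phi : Atom
  | a : ℕ → Atom
  | na : ℕ → Atom
  | c : ℕ → Atom
deriving DecidableEq

/-- The atom opposite to a literal (variable index, sign). -/
def oppAtom : ℕ × Bool → Atom
  | (v, true) => Atom.na v
  | (v, false) => Atom.a v

/-- The atom corresponding to a literal. -/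
def litAtom : ℕ × Bool → Atom
  | (v, true) => Atom.a v
  | (v, false) => Atom.na v

/-- NV(c_i): opposites of the atoms of the literals of clause C_i. -/
def NV (C : ℕ → Fin 3 → ℕ × Bool) (i : ℕ) : Finset Atom :=
  {oppAtom (C i 0), oppAtom (C i 1), oppAtom (C i 2)}

/-- The program `P^Φ` associated with a 3-CNF with m variables `A_1,…,A_m`
and n clauses `C_1,…,C_n`, the clauses given by `C`. -/
def PPhi (m n : ℕ) (C : ℕ → Fin 3 → ℕ × Bool) : Set (Rule Atom) :=
  ({⟨{Atom.phi}, ∅, {Atom.c 0, Atom.c (n+1)}⟩,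
    ⟨{Atom.c 0}, ∅, {Atom.c 1}⟩,
    ⟨{Atom.c (n+1), Atom.na 1}, ∅, {Atom.a 1}⟩,
    ⟨{Atom.c (n+1), Atom.a 1}, ∅, {Atom.na 1}⟩,
    ⟨{Atom.a m, Atom.na m}, ∅, {Atom.c 0}⟩} : Set (Rule Atom)) ∪
  {r | ∃ i ∈ Finset.Icc 1 n, ∃ α ∈ NV C i,
        r = ⟨{Atom.c i, α}, ∅, {Atom.c (i+1)}⟩} ∪
  {r | ∃ i ∈ Finset.Icc 1 (m-1),
        r = ⟨{Atom.a i, Atom.na (i+1)}, ∅, {Atom.a (i+1)}⟩ ∨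
        r = ⟨{Atom.a i, Atom.a (i+1)}, ∅, {Atom.na (i+1)}⟩ ∨
        r = ⟨{Atom.na i, Atom.na (i+1)}, ∅, {Atom.a (i+1)}⟩ ∨
        r = ⟨{Atom.na i, Atom.a (i+1)}, ∅, {Atom.na (i+1)}⟩}

/-- All variable indices mentioned by clauses 1..n lie in [1,m]. -/
def ValidCNF (m n : ℕ) (C : ℕ → Fin 3 → ℕ × Bool) : Prop :=
  ∀ i ∈ Finset.Icc 1 n, ∀ j : Fin 3, (C i j).1 ∈ Finset.Icc 1 m

/-- Truth assignment X satisfies the 3-CNF. -/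
def Sat (n : ℕ) (C : ℕ → Fin 3 → ℕ × Bool) (X : ℕ → Bool) : Prop :=
  ∀ i ∈ Finset.Icc 1 n, ∃ j : Fin 3, X (C i j).1 = (C i j).2


/-! Suppose `c_j ∉ E` for some `1 ≤ j ≤ n`, and split `E` into its part inside
`{c_0, …, c_{j-1}}` (which contains `c_0`) and the rest (which contains `c_{n+1}`). Since `E` is
elementary, some rule has a body atom in the first part and a head atom in the second. Apart from
the rules with `c_{n+1}` in the body, the only rules of `P^Φ` with some `c_k` in the body have head
`{c_{k+1}}`; so `k < j ≤ k + 1`, and the head atom `c_{k+1} = c_j` lies in `E`, a contradiction. -/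

theorem Elementary.exists_rule_from_inside [DecidableEq α] {P : Set (Rule α)} {E S : Finset α}
    (hE : Elementary P E) (hin : (E ∩ S).Nonempty) (hout : (E \ S).Nonempty) :
    ∃ r ∈ P, (r.B ∩ (E ∩ S)).Nonempty ∧ (r.H ∩ (E \ S)).Nonempty := by
  have hsplit : E \ S ⊂ E := by
    refine Finset.ssubset_iff_subset_ne.2 ⟨Finset.sdiff_subset, fun h => ?_⟩
    rw [Finset.sdiff_eq_self_iff_disjoint] at h
    exact Finset.not_disjoint_iff_nonempty_inter.2 hin h
  obtain ⟨r, hr, hH, hB, -, -⟩ := hE.2 _ hsplit hout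
  exact ⟨r, hr, by rwa [Finset.sdiff_sdiff_self_left] at hB, hH⟩

theorem oppAtom_ne_c (p : ℕ × Bool) (k : ℕ) : oppAtom p ≠ Atom.c k := by
  obtain ⟨v, b⟩ := p; cases b <;> simp [oppAtom]

theorem PPhi_head_eq_of_c_mem_body {m n : ℕ} {C : ℕ → Fin 3 → ℕ × Bool} {r : Rule Atom}
    (hr : r ∈ PPhi m n C) {k : ℕ} (hk : Atom.c k ∈ r.B) (hkn : k ≠ n + 1) :
    r.H = {Atom.c (k + 1)} := by
  simp only [PPhi, Set.mem_union, Set.mem_insert_iff, Set.mem_singleton_iff,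
    Set.mem_ofPred_eq] at hr
  rcases hr with ((rfl | rfl | rfl | rfl | rfl) | ⟨i, -, α, hα, rfl⟩) | ⟨i, -, hrule⟩
  · simp at hk
  · simp_all
  · simp_all
  · simp_all
  · simp at hk
  · have hαc : α ≠ Atom.c k := by
      simp only [NV, Finset.mem_insert, Finset.mem_singleton] at hα
      rcases hα with rfl | rfl | rfl <;> exact oppAtom_ne_c _ k
    obtain rfl : k = i := by simpa [Ne.symm hαc] using hk
    rfl
  · rcases hrule with rfl | rfl | rfl | rfl <;> simp at hk

theorem stmt9_general (m n : ℕ)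
    (C : ℕ → Fin 3 → ℕ × Bool)
    (E : Finset Atom) (hE : Elementary (PPhi m n C) E)
    (h0 : Atom.c 0 ∈ E) (h1 : Atom.c (n+1) ∈ E) :
    ∀ j ∈ Finset.Icc 1 n, Atom.c j ∈ E := by
  intro j hj
  rw [Finset.mem_Icc] at hj
  by_contra hcj
  set S := (Finset.range j).image Atom.c
  have hin : (E ∩ S).Nonempty :=
    ⟨_, Finset.mem_inter.2 ⟨h0, Finset.mem_image_of_mem _ (Finset.mem_range.2 (by omega))⟩⟩
  have hout : (E \ S).Nonempty := ⟨_, Finset.mem_sdiff.2 ⟨h1, by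
    simp only [S, Finset.mem_image, Finset.mem_range, Atom.c.injEq]; omega⟩⟩
  obtain ⟨r, hr, ⟨x, hx⟩, ⟨y, hy⟩⟩ := hE.exists_rule_from_inside hin hout
  obtain ⟨hxB, -, hxS⟩ := Finset.mem_inter.1 hx |>.imp_right Finset.mem_inter.1
  obtain ⟨hyH, hyE, hyS⟩ := Finset.mem_inter.1 hy |>.imp_right Finset.mem_sdiff.1
  obtain ⟨k, hk, rfl⟩ := Finset.mem_image.1 hxS
  rw [Finset.mem_range] at hk
  rw [PPhi_head_eq_of_c_mem_body hr hxB (by omega), Finset.mem_singleton] at hyH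
  subst hyH
  have hkj : k + 1 = j := by
    by_contra hne
    exact hyS (Finset.mem_image.2 ⟨k + 1, Finset.mem_range.2 (by omega), rfl⟩)
  exact hcj (hkj ▸ hyE)

theorem stmt9 (m n : ℕ) (hm : 1 ≤ m) (hn : 1 ≤ n)
    (C : ℕ → Fin 3 → ℕ × Bool) (hC : ValidCNF m n C)
    (E : Finset Atom) (hE : Elementary (PPhi m n C) E)
    (h0 : Atom.c 0 ∈ E) (h1 : Atom.c (n+1) ∈ E) :
    ∀ j ∈ Finset.Icc 1 n, Atom.c j ∈ E :=
  stmt9_general m n C E hE h0 h1
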